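/- Let F : ℝ^N × ℝ^M → ℝ be C¹ and u₀*(μ) a C¹ family of fixed points of Φ(·, μ) with J(μ) = ∂Φ/∂u₀ - I invertible. Define the reduced functional f(μ) = F(u₀*(μ), μ). Then ∇f(μ) = ∂F/∂μ - (∂Φ/∂μ)ᵀ λ, where λ ∈ ℝ^N is the unique solution of the adjoint equation J(μ)ᵀ λ = (∂F/∂u₀)ᵀ (all partial derivatives evaluated at (u₀*(μ), μ)). -/

import Mathlib

/-- The fully discrete periodic adjoint method in abstract form: the gradient
of the reduced functional `f(μ) = F(u₀*(μ), μ)` along the manifold of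
time-periodic solutions is `∇f = ∂F/∂μ - (∂Φ/∂μ)ᵀ λ`, where `λ` is the unique
solution of the adjoint equation `J(μ)ᵀ λ = (∂F/∂u₀)ᵀ`. -/
theorem periodic_adjoint_method_gradient {N M : ℕ}
    (Φ : EuclideanSpace ℝ (Fin N) × EuclideanSpace ℝ (Fin M) →
      EuclideanSpace ℝ (Fin N))
    (hΦ : ContDiff ℝ 1 Φ)
    (F : EuclideanSpace ℝ (Fin N) × EuclideanSpace ℝ (Fin M) → ℝ)
    (hF : ContDiff ℝ 1 F)
    (g : EuclideanSpace ℝ (Fin M) → EuclideanSpace ℝ (Fin N))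
    (hg : ContDiff ℝ 1 g) (hfix : ∀ μ, Φ (g μ, μ) = g μ)
    (J : EuclideanSpace ℝ (Fin M) →
      (EuclideanSpace ℝ (Fin N) →L[ℝ] EuclideanSpace ℝ (Fin N)))
    (hJdef : ∀ μ, J μ = fderiv ℝ (fun u => Φ (u, μ)) (g μ) -
      ContinuousLinearMap.id ℝ (EuclideanSpace ℝ (Fin N)))
    (hJ : ∀ μ, IsUnit (J μ))
    (f : EuclideanSpace ℝ (Fin M) → ℝ) (hf : ∀ μ, f μ = F (g μ, μ)) :
    ∀ μ,
      (∃! lam : EuclideanSpace ℝ (Fin N),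
        (ContinuousLinearMap.adjoint (J μ)) lam =
          gradient (fun u => F (u, μ)) (g μ)) ∧
      (∀ lam : EuclideanSpace ℝ (Fin N),
        (ContinuousLinearMap.adjoint (J μ)) lam =
          gradient (fun u => F (u, μ)) (g μ) →
        gradient f μ =
          gradient (fun m => F (g μ, m)) μ -
            (ContinuousLinearMap.adjoint
              (fderiv ℝ (fun m => Φ (g μ, m)) μ)) lam) := by
  intro μ
  have hΦd : HasFDerivAt Φ (fderiv ℝ Φ (g μ, μ)) (g μ, μ) :=
    (hΦ.differentiable one_ne_zero (g μ, μ)).hasFDerivAt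
  have hFd : HasFDerivAt F (fderiv ℝ F (g μ, μ)) (g μ, μ) :=
    (hF.differentiable one_ne_zero (g μ, μ)).hasFDerivAt
  have hgd : HasFDerivAt g (fderiv ℝ g μ) μ := (hg.differentiable one_ne_zero μ).hasFDerivAt
  set DΦ := fderiv ℝ Φ (g μ, μ) with hDΦ
  set DF := fderiv ℝ F (g μ, μ) with hDF
  set Dg := fderiv ℝ g μ with hDg
  -- partial derivatives
  have hA : fderiv ℝ (fun u => Φ (u, μ)) (g μ)
      = DΦ.comp (ContinuousLinearMap.inl ℝ (EuclideanSpace ℝ (Fin N)) (EuclideanSpace ℝ (Fin M))) :=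
    (hΦd.comp (g μ) (hasFDerivAt_prodMk_left (g μ) μ)).fderiv
  have hB : fderiv ℝ (fun m => Φ (g μ, m)) μ
      = DΦ.comp (ContinuousLinearMap.inr ℝ (EuclideanSpace ℝ (Fin N)) (EuclideanSpace ℝ (Fin M))) :=
    (hΦd.comp μ (hasFDerivAt_prodMk_right (g μ) μ)).fderiv
  have hFAd : HasFDerivAt (fun u => F (u, μ))
      (DF.comp (ContinuousLinearMap.inl ℝ (EuclideanSpace ℝ (Fin N)) (EuclideanSpace ℝ (Fin M)))) (g μ) :=
    hFd.comp (g μ) (hasFDerivAt_prodMk_left (g μ) μ)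
  have hFBd : HasFDerivAt (fun m => F (g μ, m))
      (DF.comp (ContinuousLinearMap.inr ℝ (EuclideanSpace ℝ (Fin N)) (EuclideanSpace ℝ (Fin M)))) μ :=
    hFd.comp μ (hasFDerivAt_prodMk_right (g μ) μ)
  -- chain rule for the fixed-point map
  have hpair : HasFDerivAt (fun m : EuclideanSpace ℝ (Fin M) => (g m, m))
      (Dg.prod (ContinuousLinearMap.id ℝ (EuclideanSpace ℝ (Fin M)))) μ :=
    hgd.prodMk (hasFDerivAt_id μ)
  have hchain : HasFDerivAt (fun m => Φ (g m, m))
      (DΦ.comp (Dg.prod (ContinuousLinearMap.id ℝ (EuclideanSpace ℝ (Fin M))))) μ := by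
    have h0 := HasFDerivAt.comp (f := fun m => (g m, m)) μ hΦd hpair
    exact h0
  have hchain' : HasFDerivAt g
      (DΦ.comp (Dg.prod (ContinuousLinearMap.id ℝ (EuclideanSpace ℝ (Fin M))))) μ := by
    have h : (fun m : EuclideanSpace ℝ (Fin M) => Φ (g m, m)) = g := funext fun m => hfix m
    rwa [h] at hchain
  have hEq : DΦ.comp (Dg.prod (ContinuousLinearMap.id ℝ (EuclideanSpace ℝ (Fin M)))) = Dg :=
    hchain'.unique hgd
  have key : ∀ v, DΦ (Dg v, v) = Dg v := by
    intro v
    have := congrFun (congrArg (DFunLike.coe) hEq) v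
    simpa using this
  -- J μ (Dg v) = - B v
  have hJB : ∀ v, (J μ) (Dg v)
      = -(DΦ.comp (ContinuousLinearMap.inr ℝ (EuclideanSpace ℝ (Fin N)) (EuclideanSpace ℝ (Fin M)))) v := by
    intro v
    have hsplit : DΦ (Dg v, v) = DΦ (Dg v, 0) + DΦ (0, v) := by
      rw [← map_add]
      norm_num
    rw [hJdef μ, hA]
    have hk := key v
    rw [hsplit] at hk
    simp only [ContinuousLinearMap.sub_apply, ContinuousLinearMap.comp_apply,
      ContinuousLinearMap.coe_id', id_eq, ContinuousLinearMap.inl_apply,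
      ContinuousLinearMap.inr_apply]
    linear_combination (norm := module) hk
  -- derivative of f
  have hfd : HasFDerivAt f
      (DF.comp (Dg.prod (ContinuousLinearMap.id ℝ (EuclideanSpace ℝ (Fin M))))) μ := by
    have h : (fun m : EuclideanSpace ℝ (Fin M) => F (g m, m)) = f := funext fun m => (hf m).symm
    rw [← h]
    have h0 := HasFDerivAt.comp (f := fun m => (g m, m)) μ hFd hpair
    exact h0
  -- gradient / inner product dictionary
  have hgrad : ∀ (h : EuclideanSpace ℝ (Fin M) → ℝ) (x : EuclideanSpace ℝ (Fin M))
      (h' : EuclideanSpace ℝ (Fin M) →L[ℝ] ℝ), HasFDerivAt h h' x →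
      ∀ v, (inner ℝ (gradient h x) v : ℝ) = h' v := by
    intro h x h' hd v
    rw [gradient, hd.fderiv, InnerProductSpace.toDual_symm_apply]
  have hgradE : ∀ (h : EuclideanSpace ℝ (Fin N) → ℝ) (x : EuclideanSpace ℝ (Fin N))
      (h' : EuclideanSpace ℝ (Fin N) →L[ℝ] ℝ), HasFDerivAt h h' x →
      ∀ v, (inner ℝ (gradient h x) v : ℝ) = h' v := by
    intro h x h' hd v
    rw [gradient, hd.fderiv, InnerProductSpace.toDual_symm_apply]
  -- adjoint of J μ is invertible
  obtain ⟨u, hu⟩ := hJ μ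
  set Jadj := ContinuousLinearMap.adjoint (J μ) with hJadj
  set K := ContinuousLinearMap.adjoint
    ((↑u⁻¹ : EuclideanSpace ℝ (Fin N) →L[ℝ] EuclideanSpace ℝ (Fin N))) with hK
  have hleftC : Jadj ∘L K = ContinuousLinearMap.id ℝ (EuclideanSpace ℝ (Fin N)) := by
    rw [hJadj, hK, ← ContinuousLinearMap.adjoint_comp]
    have h : (↑u⁻¹ : EuclideanSpace ℝ (Fin N) →L[ℝ] EuclideanSpace ℝ (Fin N)) ∘L (J μ)
        = ContinuousLinearMap.id ℝ (EuclideanSpace ℝ (Fin N)) := by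
      rw [← hu]; exact u.inv_mul
    rw [h, ContinuousLinearMap.adjoint_id]
  have hrightC : K ∘L Jadj = ContinuousLinearMap.id ℝ (EuclideanSpace ℝ (Fin N)) := by
    rw [hJadj, hK, ← ContinuousLinearMap.adjoint_comp]
    have h : (J μ) ∘L (↑u⁻¹ : EuclideanSpace ℝ (Fin N) →L[ℝ] EuclideanSpace ℝ (Fin N))
        = ContinuousLinearMap.id ℝ (EuclideanSpace ℝ (Fin N)) := by
      rw [← hu]; exact u.mul_inv
    rw [h, ContinuousLinearMap.adjoint_id]
  have hleft : ∀ y, Jadj (K y) = y := fun y => by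
    have := congrFun (congrArg (DFunLike.coe) hleftC) y
    simpa using this
  have hinj : Function.Injective Jadj := by
    intro x y hxy
    have hx := congrFun (congrArg (DFunLike.coe) hrightC) x
    have hy := congrFun (congrArg (DFunLike.coe) hrightC) y
    simp only [ContinuousLinearMap.comp_apply, ContinuousLinearMap.coe_comp',
      Function.comp_apply, ContinuousLinearMap.coe_id', id_eq] at hx hy
    rw [← hx, ← hy, hxy]
  refine ⟨⟨K (gradient (fun u => F (u, μ)) (g μ)), hleft _,
    fun y hy => hinj (by rw [hy, hleft])⟩, ?_⟩
  intro lam hlam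
  apply ext_inner_right ℝ
  intro v
  have h1 : (inner ℝ (gradient f μ) v : ℝ) = DF (Dg v, v) := by
    simpa using hgrad f μ _ hfd v
  have hsplitF : DF (Dg v, v) = DF (Dg v, 0) + DF (0, v) := by
    rw [← map_add]; norm_num
  have h2 : (inner ℝ (gradient (fun u => F (u, μ)) (g μ)) (Dg v) : ℝ) = DF (Dg v, 0) := by
    simpa using hgradE (fun u => F (u, μ)) (g μ) _ hFAd (Dg v)
  have h3 : (inner ℝ (gradient (fun m => F (g μ, m)) μ) v : ℝ) = DF (0, v) := by
    simpa using hgrad (fun m => F (g μ, m)) μ _ hFBd v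
  have h4 : (inner ℝ (gradient (fun u => F (u, μ)) (g μ)) (Dg v) : ℝ) =
      -(inner ℝ ((ContinuousLinearMap.adjoint (fderiv ℝ (fun m => Φ (g μ, m)) μ)) lam) v : ℝ) := by
    rw [← hlam, hJadj, hB, ContinuousLinearMap.adjoint_inner_left,
      ContinuousLinearMap.adjoint_inner_left, hJB v]
    simp [inner_neg_right]
  rw [inner_sub_left]
  linarith [h1, h2, h3, h4, hsplitF]
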